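/- Let a, b ∈ ℝ and let u be a global Schwartz solution of the h-NLS equation ∂_t u + i a ∂_x² u + b ∂_x³ u = 2 i a |u|² u + 6 b |u|² ∂_x u. For n ∈ ℤ define u_n(x,t) = e^{−inx} e^{i(an² + 2bn³)t} u(x − (2an + 3bn²)t, t). Then u_n is a global Schwartz solution of the h-NLS equation with a replaced by A = a + 3bn: ∂_t u_n + i A ∂_x² u_n + b ∂_x³ u_n = 2 i A |u_n|² u_n + 6 b |u_n|² ∂_x u_n, and u_n(x,0) = e^{−inx} u(x,0). -/

import Mathlib

open Complex

noncomputable section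

namespace GalileanAux

def Fof (u : ℝ → ℝ → ℂ) : ℝ × ℝ → ℂ := fun q => u q.1 q.2

/-- partial derivative in the first variable -/
def pd (G : ℝ × ℝ → ℂ) : ℝ × ℝ → ℂ := fun q => fderiv ℝ G q (1, 0)

/-- partial derivative in the second variable -/
def pt (G : ℝ × ℝ → ℂ) : ℝ × ℝ → ℂ := fun q => fderiv ℝ G q (0, 1)

def tf (m : ℂ) (G : ℝ × ℝ → ℂ) : ℝ × ℝ → ℂ := fun q => m * G q + pd G q

lemma pd_contDiff {G : ℝ × ℝ → ℂ} (hG : ContDiff ℝ (⊤ : ℕ∞) G) : ContDiff ℝ (⊤ : ℕ∞) (pd G) :=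
  (ContinuousLinearMap.apply ℝ ℂ ((1 : ℝ), (0 : ℝ))).contDiff.comp (hG.fderiv_right (by simp))

lemma tf_contDiff {G : ℝ × ℝ → ℂ} (m : ℂ) (hG : ContDiff ℝ (⊤ : ℕ∞) G) : ContDiff ℝ (⊤ : ℕ∞) (tf m G) :=
  (contDiff_const.mul hG).add (pd_contDiff hG)

lemma hasDerivAt_pd {G : ℝ × ℝ → ℂ} (hG : ContDiff ℝ (⊤ : ℕ∞) G) (x t : ℝ) :
    HasDerivAt (fun y => G (y, t)) (pd G (x, t)) x := by
  have h := (hG.differentiable (by simp) (x, t)).hasFDerivAt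
  have hγ : HasDerivAt (fun y : ℝ => (y, t)) ((1 : ℝ), (0 : ℝ)) x :=
    HasDerivAt.prodMk (hasDerivAt_id x) (hasDerivAt_const x t)
  exact h.comp_hasDerivAt x hγ

lemma hasDerivAt_pt {G : ℝ × ℝ → ℂ} (hG : ContDiff ℝ (⊤ : ℕ∞) G) (x t : ℝ) :
    HasDerivAt (fun s => G (x, s)) (pt G (x, t)) t := by
  have h := (hG.differentiable (by simp) (x, t)).hasFDerivAt
  have hγ : HasDerivAt (fun s : ℝ => (x, s)) ((0 : ℝ), (1 : ℝ)) t :=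
    HasDerivAt.prodMk (hasDerivAt_const t x) (hasDerivAt_id t)
  exact h.comp_hasDerivAt t hγ

lemma hasDerivAt_line {G : ℝ × ℝ → ℂ} (hG : ContDiff ℝ (⊤ : ℕ∞) G) (x t c : ℝ) :
    HasDerivAt (fun s : ℝ => G (x - c * s, s)) (fderiv ℝ G (x - c * t, t) (-c, 1)) t := by
  have h := (hG.differentiable (by simp) (x - c * t, t)).hasFDerivAt
  have h1 : HasDerivAt (fun s : ℝ => x - c * s) (-c) t := by
    simpa using (hasDerivAt_const t x).fun_sub ((hasDerivAt_id t).const_mul c)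
  have hγ : HasDerivAt (fun s : ℝ => (x - c * s, s)) ((-c : ℝ), (1 : ℝ)) t :=
    HasDerivAt.prodMk h1 (hasDerivAt_id t)
  exact HasFDerivAt.comp_hasDerivAt (hf := hγ) (hl := h) t

lemma fderiv_line_apply {G : ℝ × ℝ → ℂ} (p : ℝ × ℝ) (c : ℝ) :
    fderiv ℝ G p (-c, 1) = -(c : ℂ) * pd G p + pt G p := by
  have hv : ((-c, 1) : ℝ × ℝ) = (-c) • ((1, 0) : ℝ × ℝ) + ((0, 1) : ℝ × ℝ) := by
    simp [Prod.ext_iff]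
  rw [hv, map_add, map_smul]
  simp only [pd, pt, Complex.real_smul]
  push_cast
  ring

lemma pd_tf {G : ℝ × ℝ → ℂ} (hG : ContDiff ℝ (⊤ : ℕ∞) G) (m : ℂ) (p : ℝ × ℝ) :
    pd (tf m G) p = m * pd G p + pd (pd G) p := by
  have h1 : DifferentiableAt ℝ (fun q => m * G q) p :=
    ((hG.differentiable (by simp) p).const_mul m)
  have h2 : DifferentiableAt ℝ (pd G) p := (pd_contDiff hG).differentiable (by simp) p
  show fderiv ℝ (fun q => m * G q + pd G q) p (1, 0) = _
  rw [fderiv_fun_add h1 h2, fderiv_const_mul (hG.differentiable (by simp) p) m]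
  simp only [ContinuousLinearMap.add_apply, ContinuousLinearMap.smul_apply, smul_eq_mul]
  rfl

lemma pd_tf_fun {G : ℝ × ℝ → ℂ} (hG : ContDiff ℝ (⊤ : ℕ∞) G) (m : ℂ) :
    pd (tf m G) = tf m (pd G) := funext fun p => pd_tf hG m p

lemma deriv_transform {G : ℝ × ℝ → ℂ} (hG : ContDiff ℝ (⊤ : ℕ∞) G) (k m : ℂ) (c t : ℝ) :
    deriv (fun y : ℝ => k * Complex.exp (m * ↑y) * G (y - c * t, t))
      = fun x : ℝ => k * Complex.exp (m * ↑x) * tf m G (x - c * t, t) := by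
  funext x
  have hx : HasDerivAt (fun y : ℝ => m * (y : ℂ)) m x := by
    simpa using (Complex.ofRealCLM.hasDerivAt (x := x)).const_mul m
  have h1 := (hx.cexp).const_mul k
  have h2 : HasDerivAt (fun y : ℝ => G (y - c * t, t)) (pd G (x - c * t, t)) x := by
    have h := (hG.differentiable (by simp) (x - c * t, t)).hasFDerivAt
    have hγ : HasDerivAt (fun y : ℝ => (y - c * t, t)) ((1 : ℝ), (0 : ℝ)) x :=
      HasDerivAt.prodMk ((hasDerivAt_id x).sub_const _) (hasDerivAt_const x t)
    have H := h.comp_hasDerivAt x hγ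
    exact H
  have hd : deriv (fun y : ℝ => k * Complex.exp (m * ↑y) * G (y - c * t, t)) x
      = k * (Complex.exp (m * ↑x) * m) * G (x - c * t, t)
        + k * Complex.exp (m * ↑x) * pd G (x - c * t, t) := (h1.mul h2).deriv
  rw [hd]
  show _ = k * Complex.exp (m * ↑x) * (m * G (x - c * t, t) + pd G (x - c * t, t))
  ring

lemma deriv_time {G : ℝ × ℝ → ℂ} (hG : ContDiff ℝ (⊤ : ℕ∞) G) (k : ℂ) (ω c x t : ℝ) :
    deriv (fun s : ℝ => k * Complex.exp (Complex.I * ↑ω * ↑s) * G (x - c * s, s)) t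
      = k * Complex.exp (Complex.I * ↑ω * ↑t) *
          (Complex.I * ↑ω * G (x - c * t, t) - ↑c * pd G (x - c * t, t)
            + pt G (x - c * t, t)) := by
  have hx : HasDerivAt (fun s : ℝ => Complex.I * ↑ω * (s : ℂ)) (Complex.I * ↑ω) t := by
    simpa using (Complex.ofRealCLM.hasDerivAt (x := t)).const_mul (Complex.I * ↑ω)
  have h1 := (hx.cexp).const_mul k
  have h2 := hasDerivAt_line hG x t c
  have hd : deriv (fun s : ℝ => k * Complex.exp (Complex.I * ↑ω * ↑s) * G (x - c * s, s)) t
      = k * (Complex.exp (Complex.I * ↑ω * ↑t) * (Complex.I * ↑ω)) * G (x - c * t, t)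
        + k * Complex.exp (Complex.I * ↑ω * ↑t) * fderiv ℝ G (x - c * t, t) (-c, 1) :=
    (h1.mul h2).deriv
  rw [hd, fderiv_line_apply]
  ring

lemma htg_sub (d : ℝ) : Function.HasTemperateGrowth (fun x : ℝ => x - d) := by
  apply Function.HasTemperateGrowth.of_fderiv (k := 1) (C := 1 + |d|)
  · have h : (fderiv ℝ fun x : ℝ => x - d) = fun _ : ℝ => ContinuousLinearMap.id ℝ ℝ := by
      funext x
      rw [fderiv_sub_const]
      exact fderiv_id
    rw [h]
    exact Function.HasTemperateGrowth.const _
  · exact differentiable_id.sub_const d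
  · intro x
    have h1 : ‖x - d‖ ≤ |x| + |d| := by
      rw [Real.norm_eq_abs]
      exact abs_sub _ _
    have h2 : |x| ≤ ‖x‖ := le_of_eq (Real.norm_eq_abs x).symm
    rw [Real.norm_eq_abs]
    nlinarith [abs_nonneg x, abs_nonneg d, abs_sub x d]

lemma iteratedDeriv_cexp_real (w : ℂ) : ∀ (k : ℕ),
    iteratedDeriv k (fun x : ℝ => Complex.exp (w * ↑x)) = fun x : ℝ => w ^ k * Complex.exp (w * ↑x) := by
  intro k
  induction k with
  | zero => simp
  | succ k ih =>
    rw [iteratedDeriv_succ, ih]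
    funext x
    have hx : HasDerivAt (fun y : ℝ => w * (y : ℂ)) w x := by
      simpa using (Complex.ofRealCLM.hasDerivAt (x := x)).const_mul w
    have := (hx.cexp).const_mul (w ^ k)
    rw [this.deriv, pow_succ]
    ring

lemma htg_cexp (w : ℂ) (hw : w.re = 0) :
    Function.HasTemperateGrowth (fun x : ℝ => Complex.exp (w * ↑x)) := by
  constructor
  · exact (contDiff_const.mul Complex.ofRealCLM.contDiff).cexp
  · intro k
    refine ⟨0, ‖w‖ ^ k, fun x => ?_⟩
    rw [norm_iteratedFDeriv_eq_norm_iteratedDeriv, iteratedDeriv_cexp_real]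
    simp [norm_mul, norm_pow, Complex.norm_exp, Complex.mul_re, hw,
      Complex.ofReal_re, Complex.ofReal_im]

end GalileanAux


/-- `u` is a global Schwartz solution of the h-NLS equation
`∂ₜu + i a ∂ₓ²u + b ∂ₓ³u = 2 i a |u|²u + 6 b |u|² ∂ₓu`. -/
def IsGlobalSchwartzSolution (a b : ℝ) (u : ℝ → ℝ → ℂ) : Prop :=
  ContDiff ℝ (⊤ : ℕ∞) (fun q : ℝ × ℝ => u q.1 q.2) ∧
  (∀ t : ℝ, ∃ g : SchwartzMap ℝ ℂ, ∀ x : ℝ, g x = u x t) ∧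
  ∀ x t : ℝ,
    deriv (fun s => u x s) t
        + Complex.I * (a : ℂ) * deriv (deriv (fun y => u y t)) x
        + (b : ℂ) * deriv (deriv (deriv (fun y => u y t))) x
      = 2 * Complex.I * (a : ℂ) * ((‖u x t‖ ^ 2 : ℝ) : ℂ) * u x t
        + 6 * (b : ℂ) * ((‖u x t‖ ^ 2 : ℝ) : ℂ) * deriv (fun y => u y t) x

theorem galilean_transform_solution (a b : ℝ) (u : ℝ → ℝ → ℂ)
    (hu : IsGlobalSchwartzSolution a b u) (n : ℤ) (un : ℝ → ℝ → ℂ)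
    (hun : ∀ x t : ℝ,
      un x t = Complex.exp (-Complex.I * (n : ℂ) * (x : ℂ)) *
        Complex.exp (Complex.I * ((a * n ^ 2 + 2 * b * n ^ 3 : ℝ) : ℂ) * (t : ℂ)) *
        u (x - (2 * a * n + 3 * b * n ^ 2) * t) t) :
    IsGlobalSchwartzSolution (a + 3 * b * n) b un ∧
      ∀ x : ℝ, un x 0 = Complex.exp (-Complex.I * (n : ℂ) * (x : ℂ)) * u x 0 := by
  obtain ⟨hF0, hSch, hPDE⟩ := hu
  have hF : ContDiff ℝ (⊤ : ℕ∞) (GalileanAux.Fof u) := hF0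
  set ωR : ℝ := a * (n : ℝ) ^ 2 + 2 * b * (n : ℝ) ^ 3 with hω
  set cR : ℝ := 2 * a * (n : ℝ) + 3 * b * (n : ℝ) ^ 2 with hcR
  refine ⟨⟨?_, ?_, ?_⟩, ?_⟩
  · -- smoothness
    have hrepr : (fun q : ℝ × ℝ => un q.1 q.2) = fun q : ℝ × ℝ =>
        Complex.exp (-Complex.I * (n : ℂ) * (q.1 : ℂ)) *
          Complex.exp (Complex.I * (ωR : ℂ) * (q.2 : ℂ)) *
          GalileanAux.Fof u (q.1 - cR * q.2, q.2) := by
      funext q; exact hun q.1 q.2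
    rw [hrepr]
    have h1 : ContDiff ℝ (⊤ : ℕ∞) fun q : ℝ × ℝ => -Complex.I * (n : ℂ) * (q.1 : ℂ) :=
      contDiff_const.mul (Complex.ofRealCLM.contDiff.comp contDiff_fst)
    have h2 : ContDiff ℝ (⊤ : ℕ∞) fun q : ℝ × ℝ => Complex.I * (ωR : ℂ) * (q.2 : ℂ) :=
      contDiff_const.mul (Complex.ofRealCLM.contDiff.comp contDiff_snd)
    have h3 : ContDiff ℝ (⊤ : ℕ∞) fun q : ℝ × ℝ => (q.1 - cR * q.2, q.2) :=
      ContDiff.prodMk (contDiff_fst.sub (contDiff_const.mul contDiff_snd)) contDiff_snd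
    exact (h1.cexp.mul h2.cexp).mul (hF.comp h3)
  · -- Schwartz
    intro t
    obtain ⟨g, hg⟩ := hSch t
    have hup : ∃ (k : ℕ) (C : ℝ), ∀ x : ℝ, ‖x‖ ≤ C * (1 + ‖x - cR * t‖) ^ k := by
      refine ⟨1, 1 + |cR * t|, fun x => ?_⟩
      simp only [Real.norm_eq_abs, pow_one]
      have h1 := abs_add_le (x - cR * t) (cR * t)
      rw [sub_add_cancel] at h1
      nlinarith [abs_nonneg (x - cR * t), abs_nonneg (cR * t),
        mul_nonneg (abs_nonneg (cR * t)) (abs_nonneg (x - cR * t))]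
    let g1 := SchwartzMap.compCLM (𝕜 := ℝ) (GalileanAux.htg_sub (cR * t)) hup g
    let g2 := SchwartzMap.bilinLeftCLM (ContinuousLinearMap.mul ℝ ℂ)
      (GalileanAux.htg_cexp (-Complex.I * (n : ℂ)) (by simp)) g1
    refine ⟨Complex.exp (Complex.I * (ωR : ℂ) * (t : ℂ)) • g2, fun x => ?_⟩
    have hval : (Complex.exp (Complex.I * (ωR : ℂ) * (t : ℂ)) • g2) x
        = Complex.exp (Complex.I * (ωR : ℂ) * (t : ℂ)) *
            (g (x - cR * t) * Complex.exp (-Complex.I * (n : ℂ) * (x : ℂ))) := rfl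
    rw [hval, hg, hun]
    ring
  · -- PDE
    intro x t
    have e0 : (fun y : ℝ => un y t) = fun y : ℝ =>
        Complex.exp (Complex.I * (ωR : ℂ) * (t : ℂ)) *
          Complex.exp (-Complex.I * (n : ℂ) * (y : ℂ)) *
          GalileanAux.Fof u (y - cR * t, t) := by
      funext y; rw [hun]
      show _ = Complex.exp (Complex.I * (ωR : ℂ) * (t : ℂ)) *
        Complex.exp (-Complex.I * (n : ℂ) * (y : ℂ)) * u (y - cR * t) t
      ring
    have e1 : deriv (fun y : ℝ => un y t) = fun z : ℝ =>
        Complex.exp (Complex.I * (ωR : ℂ) * (t : ℂ)) *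
          Complex.exp (-Complex.I * (n : ℂ) * (z : ℂ)) *
          GalileanAux.tf (-Complex.I * (n : ℂ)) (GalileanAux.Fof u) (z - cR * t, t) := by
      rw [e0]; exact GalileanAux.deriv_transform hF _ _ _ _
    have e2 : deriv (deriv (fun y : ℝ => un y t)) = fun z : ℝ =>
        Complex.exp (Complex.I * (ωR : ℂ) * (t : ℂ)) *
          Complex.exp (-Complex.I * (n : ℂ) * (z : ℂ)) *
          GalileanAux.tf (-Complex.I * (n : ℂ))
            (GalileanAux.tf (-Complex.I * (n : ℂ)) (GalileanAux.Fof u)) (z - cR * t, t) := by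
      rw [e1]; exact GalileanAux.deriv_transform (GalileanAux.tf_contDiff _ hF) _ _ _ _
    have e3 : deriv (deriv (deriv (fun y : ℝ => un y t))) = fun z : ℝ =>
        Complex.exp (Complex.I * (ωR : ℂ) * (t : ℂ)) *
          Complex.exp (-Complex.I * (n : ℂ) * (z : ℂ)) *
          GalileanAux.tf (-Complex.I * (n : ℂ)) (GalileanAux.tf (-Complex.I * (n : ℂ))
            (GalileanAux.tf (-Complex.I * (n : ℂ)) (GalileanAux.Fof u))) (z - cR * t, t) := by
      rw [e2]
      exact GalileanAux.deriv_transform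
        (GalileanAux.tf_contDiff _ (GalileanAux.tf_contDiff _ hF)) _ _ _ _
    have et : deriv (fun s : ℝ => un x s) t
        = Complex.exp (-Complex.I * (n : ℂ) * (x : ℂ)) *
            Complex.exp (Complex.I * (ωR : ℂ) * (t : ℂ)) *
            (Complex.I * (ωR : ℂ) * GalileanAux.Fof u (x - cR * t, t)
              - (cR : ℂ) * GalileanAux.pd (GalileanAux.Fof u) (x - cR * t, t)
              + GalileanAux.pt (GalileanAux.Fof u) (x - cR * t, t)) := by
      have e0t : (fun s : ℝ => un x s) = fun s : ℝ =>
          Complex.exp (-Complex.I * (n : ℂ) * (x : ℂ)) *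
            Complex.exp (Complex.I * (ωR : ℂ) * (s : ℂ)) *
            GalileanAux.Fof u (x - cR * s, s) := by
        funext s; rw [hun]; rfl
      rw [e0t]; exact GalileanAux.deriv_time hF _ _ _ _ _
    have f1 : deriv (fun y : ℝ => u y t) = fun z : ℝ => GalileanAux.pd (GalileanAux.Fof u) (z, t) :=
      funext fun z => (GalileanAux.hasDerivAt_pd hF z t).deriv
    have f2 : deriv (deriv (fun y : ℝ => u y t))
        = fun z : ℝ => GalileanAux.pd (GalileanAux.pd (GalileanAux.Fof u)) (z, t) := by
      rw [f1]
      exact funext fun z => (GalileanAux.hasDerivAt_pd (GalileanAux.pd_contDiff hF) z t).deriv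
    have f3 : deriv (deriv (deriv (fun y : ℝ => u y t)))
        = fun z : ℝ => GalileanAux.pd (GalileanAux.pd (GalileanAux.pd (GalileanAux.Fof u))) (z, t) := by
      rw [f2]
      exact funext fun z =>
        (GalileanAux.hasDerivAt_pd (GalileanAux.pd_contDiff (GalileanAux.pd_contDiff hF)) z t).deriv
    have ftt : deriv (fun s : ℝ => u (x - cR * t) s) t
        = GalileanAux.pt (GalileanAux.Fof u) (x - cR * t, t) :=
      (GalileanAux.hasDerivAt_pt hF (x - cR * t) t).deriv
    have hP := hPDE (x - cR * t) t
    rw [ftt, f3, f2, f1] at hP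
    beta_reduce at hP
    rw [et, e3, e2, e1]
    beta_reduce
    rw [hun x t]
    have hnrm : ‖Complex.exp (-Complex.I * (n : ℂ) * (x : ℂ)) *
        Complex.exp (Complex.I * (ωR : ℂ) * (t : ℂ)) * u (x - cR * t) t‖
        = ‖u (x - cR * t) t‖ := by
      simp [Complex.norm_exp, Complex.mul_re, Complex.ofReal_re, Complex.ofReal_im]
    rw [hnrm]
    have hA : GalileanAux.tf (-Complex.I * (n : ℂ)) (GalileanAux.Fof u) (x - cR * t, t)
        = -Complex.I * (n : ℂ) * u (x - cR * t) t
          + GalileanAux.pd (GalileanAux.Fof u) (x - cR * t, t) := rfl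
    have hB : GalileanAux.tf (-Complex.I * (n : ℂ)) (GalileanAux.tf (-Complex.I * (n : ℂ))
          (GalileanAux.Fof u)) (x - cR * t, t)
        = -Complex.I * (n : ℂ) * (-Complex.I * (n : ℂ) * u (x - cR * t) t
              + GalileanAux.pd (GalileanAux.Fof u) (x - cR * t, t))
          + (-Complex.I * (n : ℂ) * GalileanAux.pd (GalileanAux.Fof u) (x - cR * t, t)
              + GalileanAux.pd (GalileanAux.pd (GalileanAux.Fof u)) (x - cR * t, t)) := by
      show -Complex.I * (n : ℂ) * GalileanAux.tf (-Complex.I * (n : ℂ)) (GalileanAux.Fof u)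
          (x - cR * t, t) + GalileanAux.pd (GalileanAux.tf (-Complex.I * (n : ℂ))
          (GalileanAux.Fof u)) (x - cR * t, t) = _
      rw [GalileanAux.pd_tf hF, hA]
    have hC : GalileanAux.tf (-Complex.I * (n : ℂ)) (GalileanAux.tf (-Complex.I * (n : ℂ))
          (GalileanAux.tf (-Complex.I * (n : ℂ)) (GalileanAux.Fof u))) (x - cR * t, t)
        = -Complex.I * (n : ℂ) * (-Complex.I * (n : ℂ) * (-Complex.I * (n : ℂ) * u (x - cR * t) t
              + GalileanAux.pd (GalileanAux.Fof u) (x - cR * t, t))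
            + (-Complex.I * (n : ℂ) * GalileanAux.pd (GalileanAux.Fof u) (x - cR * t, t)
              + GalileanAux.pd (GalileanAux.pd (GalileanAux.Fof u)) (x - cR * t, t)))
          + (-Complex.I * (n : ℂ) * (-Complex.I * (n : ℂ) *
                GalileanAux.pd (GalileanAux.Fof u) (x - cR * t, t)
              + GalileanAux.pd (GalileanAux.pd (GalileanAux.Fof u)) (x - cR * t, t))
            + (-Complex.I * (n : ℂ) *
                GalileanAux.pd (GalileanAux.pd (GalileanAux.Fof u)) (x - cR * t, t)
              + GalileanAux.pd (GalileanAux.pd (GalileanAux.pd (GalileanAux.Fof u)))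
                  (x - cR * t, t))) := by
      show -Complex.I * (n : ℂ) * GalileanAux.tf (-Complex.I * (n : ℂ))
          (GalileanAux.tf (-Complex.I * (n : ℂ)) (GalileanAux.Fof u)) (x - cR * t, t)
          + GalileanAux.pd (GalileanAux.tf (-Complex.I * (n : ℂ))
            (GalileanAux.tf (-Complex.I * (n : ℂ)) (GalileanAux.Fof u))) (x - cR * t, t) = _
      rw [GalileanAux.pd_tf (GalileanAux.tf_contDiff _ hF), GalileanAux.pd_tf_fun hF,
        GalileanAux.pd_tf (GalileanAux.pd_contDiff hF), hB]
      rfl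
    rw [hC, hB, hA]
    rw [show GalileanAux.Fof u (x - cR * t, t) = u (x - cR * t) t from rfl]
    rw [show ((ωR : ℝ) : ℂ) = (a : ℂ) * (n : ℂ) ^ 2 + 2 * (b : ℂ) * (n : ℂ) ^ 3 by
      rw [hω]; push_cast; ring]
    rw [show ((cR : ℝ) : ℂ) = 2 * (a : ℂ) * (n : ℂ) + 3 * (b : ℂ) * (n : ℂ) ^ 2 by
      rw [hcR]; push_cast; ring]
    rw [show ((a + 3 * b * (n : ℝ) : ℝ) : ℂ) = (a : ℂ) + 3 * (b : ℂ) * (n : ℂ) by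
      push_cast; ring]
    linear_combination
      (Complex.exp (-Complex.I * (n : ℂ) * (x : ℂ)) *
          Complex.exp (Complex.I * ((a : ℂ) * (n : ℂ) ^ 2 + 2 * (b : ℂ) * (n : ℂ) ^ 3) * (t : ℂ))) * hP
      + (Complex.exp (-Complex.I * (n : ℂ) * (x : ℂ)) *
          Complex.exp (Complex.I * ((a : ℂ) * (n : ℂ) ^ 2 + 2 * (b : ℂ) * (n : ℂ) ^ 3) * (t : ℂ))) *
        (Complex.I * ((a : ℂ) * (n : ℂ) ^ 2 + 2 * (b : ℂ) * (n : ℂ) ^ 3) * u (x - cR * t) t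
          - (2 * (a : ℂ) * (n : ℂ) + 3 * (b : ℂ) * (n : ℂ) ^ 2) *
              GalileanAux.pd (GalileanAux.Fof u) (x - cR * t, t)) * Complex.I_sq
  · -- initial condition
    intro x
    rw [hun x 0]
    norm_num
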